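/- arXiv:2403.02957 — 2 statements merged into one kernel-verified Lean document; each statement's English description precedes it below -/
import Mathlib

section
/- Let β ∈ (0,1) and t ≥ 1 an integer. Then β·√((1−β)^{t−1}) / (1 − (1−β)^t) ≤ (1 + tβ) / (t·(1 + ((t−1)/2)·β)) ≤ 2/t. -/
theorem one_sub_pow_mul_one_add_mul_le_one {a : ℝ} (ha₀ : -1 ≤ a) (ha₁ : a ≤ 1) (n : ℕ) :
    (1 - a) ^ n * (1 + n * a) ≤ 1 :=
  calc (1 - a) ^ n * (1 + n * a) ≤ (1 - a) ^ n * (1 + a) ^ n := by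
        gcongr
        exact one_add_mul_le_pow (by linarith) n
    _ = (1 - a ^ 2) ^ n := by rw [← mul_pow]; ring
    _ ≤ 1 := pow_le_one₀ (by nlinarith) (by nlinarith)

/-- Since `1 - a ≤ (1 - a / 2) ^ 2`, the square root of `(1 - a) ^ n` is at most `(1 - a / 2) ^ n`,
to which the Bernoulli-type bound above applies with `a / 2`. -/
theorem sqrt_one_sub_pow_mul_one_add_half_mul_le_one {a : ℝ} (ha₀ : 0 ≤ a) (ha₁ : a ≤ 1)
    (n : ℕ) : √((1 - a) ^ n) * (1 + n / 2 * a) ≤ 1 := by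
  have hsqrt : √((1 - a) ^ n) ≤ (1 - a / 2) ^ n := by
    rw [Real.sqrt_le_iff, ← pow_mul, mul_comm, pow_mul]
    refine ⟨pow_nonneg (by linarith) n, pow_le_pow_left₀ (by linarith) ?_ n⟩
    nlinarith
  calc √((1 - a) ^ n) * (1 + n / 2 * a) = √((1 - a) ^ n) * (1 + n * (a / 2)) := by ring
    _ ≤ (1 - a / 2) ^ n * (1 + n * (a / 2)) :=
        mul_le_mul_of_nonneg_right hsqrt (by positivity)
    _ ≤ 1 := one_sub_pow_mul_one_add_mul_le_one (by linarith) (by linarith) n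

/-- Key bound combining the Bernoulli variant inequality:
`β·√((1−β)^{t−1}) / (1 − (1−β)^t) ≤ (1 + tβ)/(t·(1 + ((t−1)/2)·β)) ≤ 2/t`. -/
theorem beta_sqrt_ratio_bound (β : ℝ) (hβ0 : 0 < β) (hβ1 : β < 1)
    (t : ℕ) (ht : 1 ≤ t) :
    β * Real.sqrt ((1 - β) ^ (t - 1)) / (1 - (1 - β) ^ t) ≤
        (1 + (t : ℝ) * β) / ((t : ℝ) * (1 + (((t : ℝ) - 1) / 2) * β)) ∧
      (1 + (t : ℝ) * β) / ((t : ℝ) * (1 + (((t : ℝ) - 1) / 2) * β)) ≤ 2 / (t : ℝ) := by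
  have ht₁ : (1 : ℝ) ≤ t := by exact_mod_cast ht
  have hsqrt : √((1 - β) ^ (t - 1)) * (1 + ((t : ℝ) - 1) / 2 * β) ≤ 1 := by
    simpa [Nat.cast_sub ht] using
      sqrt_one_sub_pow_mul_one_add_half_mul_le_one hβ0.le hβ1.le (t - 1)
  have hpow : (1 - β) ^ t * (1 + t * β) ≤ 1 :=
    one_sub_pow_mul_one_add_mul_le_one (by linarith) hβ1.le t
  have hden : 0 < 1 - (1 - β) ^ t := by
    have : (1 - β) ^ t < 1 := pow_lt_one₀ (by linarith) (by linarith) (by omega)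
    linarith
  have hm : 0 < 1 + ((t : ℝ) - 1) / 2 * β := by nlinarith
  constructor
  · rw [div_le_div_iff₀ hden (by positivity)]
    calc β * √((1 - β) ^ (t - 1)) * (t * (1 + ((t : ℝ) - 1) / 2 * β))
        = t * β * (√((1 - β) ^ (t - 1)) * (1 + ((t : ℝ) - 1) / 2 * β)) := by ring
      _ ≤ t * β := mul_le_of_le_one_right (by positivity) hsqrt
      _ ≤ (1 + t * β) * (1 - (1 - β) ^ t) := by linear_combination hpow
  · rw [div_le_div_iff₀ (by positivity) (by positivity)]
    nlinarith
end

section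
/- Let α_1 ∈ (0,1), and for t ≥ 2 define L_{2:t} = (1−α_1)√(ᾱ_t)/((1−ᾱ_t)√(α_1)) with ᾱ_t = ∏_{i=1}^t α_i and α_1 ≥ α_2 ≥ ⋯. Then with β_1 = 1−α_1, L_{2:t} ≤ β_1·√((1−β_1)^{t−1})/(1 − (1−β_1)^t) ≤ 2/t. -/
/-!
Since the `αᵢ` decrease, `ᾱ_t ≤ α₁^t`, and `x ↦ √x / (1 - x)` is increasing on `[0, 1)`, which
gives the first inequality. For the second, write `β = 1 - α₁` and `t = m + 1`. The factor
inequalities `(1 - β)(1 + β/2)² ≤ 1` and `(1 - β)(1 + β) ≤ 1`, raised to powers and combined with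
Bernoulli's inequality, give `√((1 - β)^m) ≤ 1 / (1 + mβ/2)` and
`1 - (1 - β)^t ≥ tβ / (1 + tβ)`; the claim then reduces to `1 + tβ ≤ 2 (1 + mβ/2)`, i.e. `β ≤ 1`.
-/

open Real

lemma prod_Icc_le_pow {α : ℕ → ℝ} {a : ℝ} {t : ℕ}
    (h0 : ∀ i ∈ Finset.Icc 1 t, 0 ≤ α i) (ha : ∀ i ∈ Finset.Icc 1 t, α i ≤ a) :
    ∏ i ∈ Finset.Icc 1 t, α i ≤ a ^ t := by
  calc ∏ i ∈ Finset.Icc 1 t, α i ≤ ∏ _i ∈ Finset.Icc 1 t, a := Finset.prod_le_prod h0 ha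
    _ = a ^ t := by rw [Finset.prod_const, Nat.card_Icc, Nat.add_sub_cancel]

lemma sqrt_div_one_sub_le_sqrt_div_one_sub {x y : ℝ} (hxy : x ≤ y) (hy : y < 1) :
    √x / (1 - x) ≤ √y / (1 - y) :=
  div_le_div₀ (sqrt_nonneg y) (sqrt_le_sqrt hxy) (by linarith) (by linarith)

lemma one_sub_mul_sqrt_div_le_of_le_pow {a x : ℝ} {m : ℕ} (ha0 : 0 < a) (ha1 : a < 1)
    (hx : x ≤ a ^ (m + 1)) :
    (1 - a) * √x / ((1 - x) * √a) ≤ (1 - a) * √(a ^ m) / (1 - a ^ (m + 1)) := by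
  have hsqrt_a : 0 < √a := sqrt_pos.mpr ha0
  have hsplit : √(a ^ (m + 1)) = √(a ^ m) * √a := by
    rw [pow_succ, sqrt_mul (pow_nonneg ha0.le m)]
  calc (1 - a) * √x / ((1 - x) * √a) = (1 - a) / √a * (√x / (1 - x)) := by
        rw [div_mul_div_comm, mul_comm √a]
    _ ≤ (1 - a) / √a * (√(a ^ (m + 1)) / (1 - a ^ (m + 1))) :=
        mul_le_mul_of_nonneg_left
          (sqrt_div_one_sub_le_sqrt_div_one_sub hx (pow_lt_one₀ ha0.le ha1 (by omega)))
          (div_nonneg (by linarith) hsqrt_a.le)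
    _ = (1 - a) * √(a ^ m) / (1 - a ^ (m + 1)) := by
        rw [hsplit]
        field_simp

lemma pow_mul_one_add_mul_pow_le_one {x c : ℝ} {k : ℕ} (hx : 0 ≤ x) (hc : 0 ≤ c)
    (h : x * (1 + c) ^ k ≤ 1) (n : ℕ) : x ^ n * (1 + n * c) ^ k ≤ 1 := by
  have hbern : 1 + n * c ≤ (1 + c) ^ n := one_add_mul_le_pow (by linarith) n
  calc x ^ n * (1 + n * c) ^ k ≤ x ^ n * ((1 + c) ^ n) ^ k := by gcongr
    _ = (x * (1 + c) ^ k) ^ n := by ring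
    _ ≤ 1 := pow_le_one₀ (by positivity) h

lemma sqrt_one_sub_pow_le {β : ℝ} (hβ0 : 0 ≤ β) (hβ1 : β ≤ 1) (m : ℕ) :
    √((1 - β) ^ m) ≤ 1 / (1 + m * (β / 2)) := by
  have hfactor : (1 - β) * (1 + β / 2) ^ 2 ≤ 1 := by
    nlinarith [mul_nonneg hβ0 (sq_nonneg β)]
  have hpow := pow_mul_one_add_mul_pow_le_one (by linarith) (by linarith) hfactor m
  rw [le_div_iff₀ (by positivity), ← sqrt_sq (by positivity : 0 ≤ 1 + m * (β / 2)),
    ← sqrt_mul (pow_nonneg (by linarith) m)]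
  exact sqrt_le_one.mpr hpow

lemma mul_sqrt_pow_div_one_sub_pow_le_two_div {β : ℝ} (hβ0 : 0 < β) (hβ1 : β ≤ 1) (m : ℕ) :
    β * √((1 - β) ^ m) / (1 - (1 - β) ^ (m + 1)) ≤ 2 / ((m + 1 : ℕ) : ℝ) := by
  set n : ℕ := m + 1 with hn
  have hsqrt := sqrt_one_sub_pow_le hβ0.le hβ1 m
  have hpow : (1 - β) ^ n * (1 + n * β) ≤ 1 := by
    simpa using pow_mul_one_add_mul_pow_le_one (k := 1) (by linarith) hβ0.le (by nlinarith) n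
  have hn_pos : (0 : ℝ) < n := by positivity
  have hden : 0 < 1 - (1 - β) ^ n := by
    have : (1 - β) ^ n < 1 := pow_lt_one₀ (by linarith) (by linarith) (by omega)
    linarith
  rw [div_le_div_iff₀ hden hn_pos]
  have hcast : (n : ℝ) = m + 1 := by push_cast [hn]; ring
  rw [le_div_iff₀ (by positivity)] at hsqrt
  have hsqrt' : √((1 - β) ^ m) * (1 + n * β) ≤ 2 := by
    rw [hcast]
    nlinarith [mul_le_mul_of_nonneg_left hβ1 (sqrt_nonneg ((1 - β) ^ m))]
  have key : β * √((1 - β) ^ m) * n * (1 + n * β) ≤ 2 * (1 - (1 - β) ^ n) * (1 + n * β) := by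
    nlinarith [mul_pos hβ0 hn_pos]
  exact le_of_mul_le_mul_right key (by positivity)

/-- The concatenated Lipschitz constant `L_{2:t} = (1−α₁)√(ᾱ_t)/((1−ᾱ_t)√α₁)`
satisfies `L_{2:t} ≤ β₁·√((1−β₁)^{t−1})/(1 − (1−β₁)^t) ≤ 2/t`, where `β₁ = 1 − α₁`. -/
theorem concatenated_lipschitz_decay (T : ℕ) (α : ℕ → ℝ)
    (hα : ∀ i, 1 ≤ i → i ≤ T → 0 < α i ∧ α i < 1)
    (hmono : ∀ i j, 1 ≤ i → i ≤ j → j ≤ T → α j ≤ α i)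
    (abar : ℕ → ℝ)
    (habar : ∀ t, abar t = ∏ i ∈ Finset.Icc 1 t, α i)
    (t : ℕ) (ht2 : 2 ≤ t) (htT : t ≤ T) :
    (1 - α 1) * Real.sqrt (abar t) / ((1 - abar t) * Real.sqrt (α 1)) ≤
        (1 - α 1) * Real.sqrt ((1 - (1 - α 1)) ^ (t - 1)) /
          (1 - (1 - (1 - α 1)) ^ t) ∧
      (1 - α 1) * Real.sqrt ((1 - (1 - α 1)) ^ (t - 1)) /
          (1 - (1 - (1 - α 1)) ^ t) ≤ 2 / (t : ℝ) := by
  obtain ⟨m, rfl⟩ : ∃ m, t = m + 1 := ⟨t - 1, by omega⟩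
  obtain ⟨hα1_pos, hα1_lt⟩ := hα 1 le_rfl (by omega)
  have habar_le : abar (m + 1) ≤ α 1 ^ (m + 1) := by
    rw [habar]
    apply prod_Icc_le_pow
    · intro i hi
      exact (hα i (Finset.mem_Icc.mp hi).1 (by grind)).1.le
    · intro i hi
      exact hmono 1 i le_rfl (Finset.mem_Icc.mp hi).1 (by grind)
  rw [Nat.add_sub_cancel]
  refine ⟨?_, mul_sqrt_pow_div_one_sub_pow_le_two_div (by linarith) (by linarith) m⟩
  rw [sub_sub_cancel]
  exact one_sub_mul_sqrt_div_le_of_le_pow hα1_pos hα1_lt habar_le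
end
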